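/- One-step version of the projection lemma: Let E ⊆ ℝ^n be an F_σ set with |E| = t ∈ (0,∞). Then there exists an F_σ set E_1 ⊆ E with |E_1| = t/2 such that for every F_σ set A ⊆ E with |A| ≥ t/2, the (n−1)-measure of Π_1(E_1) is at most the (n−1)-measure of Π_1(A). -/

import Mathlib

open MeasureTheory

/-- A set is F_σ if it is a countable union of closed sets. -/
def IsFsigma {X : Type*} [TopologicalSpace X] (s : Set X) : Prop :=
  ∃ g : ℕ → Set X, (∀ i, IsClosed (g i)) ∧ s = ⋃ i, g i

/-- The orthogonal projection of ℝ^n onto the coordinate hyperplane x_j = 0,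
identified with ℝ^{n-1}. -/
def projHyp {n : ℕ} (j : Fin n) (x : Fin n → ℝ) : {i : Fin n // i ≠ j} → ℝ :=
  fun i => x i.1

/-!
Let `ρ` be the image under `Π₁` of Lebesgue measure restricted to `E`; it is absolutely
continuous on the hyperplane, with density the section function `σ₁`. Every `A ⊆ E` with
`|A| ≥ t/2` has `ρ (Π₁ A) ≥ |A| ≥ t/2`, so it suffices to find `S` of least measure among the
sets with `ρ S ≥ t/2`. By the bathtub principle such an `S` is a superlevel set `{σ₁ > l}`
completed by part of the level set `{σ₁ = l}`: trading `S \ T` (where `σ₁ ≥ l`) for `T \ S`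
(where `σ₁ ≤ l`) at equal `ρ`-mass cannot decrease the measure. Parts of prescribed measure exist
because the distribution function of a coordinate under Lebesgue measure is continuous, and
`E ∩ Π₁⁻¹ S` contains an F_σ set of the same measure by inner regularity.
-/

open Set Filter Topology ENNReal

section Fsigma

variable {X : Type*} [TopologicalSpace X] {s : Set X}

lemma IsFsigma.measurableSet [MeasurableSpace X] [OpensMeasurableSpace X] (hs : IsFsigma s) :
    MeasurableSet s := by
  obtain ⟨g, hg, rfl⟩ := hs
  exact .iUnion fun i ↦ (hg i).measurableSet

lemma IsFsigma.isSigmaCompact [SigmaCompactSpace X] (hs : IsFsigma s) : IsSigmaCompact s := by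
  obtain ⟨g, hg, rfl⟩ := hs
  exact isSigmaCompact_iUnion _ fun i ↦
    isSigmaCompact_univ.of_isClosed_subset (hg i) (subset_univ _)

lemma IsSigmaCompact.measurableSet [T2Space X] [MeasurableSpace X] [OpensMeasurableSpace X]
    (hs : IsSigmaCompact s) : MeasurableSet s := by
  obtain ⟨K, hK, rfl⟩ := hs
  exact .iUnion fun i ↦ (hK i).isClosed.measurableSet

lemma exists_isFsigma_subset_measure_eq [T2Space X] [MeasurableSpace X] [OpensMeasurableSpace X]
    {μ : Measure X} [μ.InnerRegularCompactLTTop] (hs : MeasurableSet s) (hsfin : μ s ≠ ∞) :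
    ∃ t ⊆ s, IsFsigma t ∧ μ t = μ s := by
  choose K hKs hK hμK using fun k : ℕ ↦
    hs.exists_isCompact_lt_add hsfin (ENNReal.inv_ne_zero.2 (natCast_ne_top k))
  refine ⟨⋃ k, K k, iUnion_subset hKs, ⟨K, fun k ↦ (hK k).isClosed, rfl⟩,
    le_antisymm (measure_mono (iUnion_subset hKs)) ?_⟩
  refine ENNReal.le_of_forall_pos_le_add fun ε hε _ ↦ ?_
  obtain ⟨k, hk⟩ := ENNReal.exists_inv_nat_lt (a := ε) (by positivity)
  calc μ s ≤ μ (K k) + (k : ℝ≥0∞)⁻¹ := (hμK k).le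
    _ ≤ μ (⋃ k, K k) + ε := add_le_add (measure_mono (subset_iUnion K k)) hk.le

end Fsigma

lemma continuous_measure_Iic (ν : Measure ℝ) [IsFiniteMeasure ν] [NullSingletonClass ν] :
    Continuous fun c ↦ ν (Iic c) := by
  refine continuous_iff_continuousAt.2 fun b ↦ ?_
  have hm : Tendsto (fun x ↦ ν (Icc (b - |x - b|) (b + |x - b|))) (𝓝 b) (𝓝 0) := by
    have : Tendsto (fun x ↦ |x - b|) (𝓝 b) (𝓝 0) := by
      simpa using (continuous_sub_right b).abs.tendsto b
    exact (tendsto_measure_Icc ν b).comp this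
  have hcover : ∀ x u v, Icc v u ⊆ uIcc x b →
      ν (Iic u) ≤ ν (Iic v) + ν (Icc (b - |x - b|) (b + |x - b|)) := fun x u v h ↦ calc
    ν (Iic u) ≤ ν (Iic v ∪ Icc v u) := measure_mono Iic_subset_Iic_union_Icc
    _ ≤ ν (Iic v) + ν (Icc v u) := measure_union_le _ _
    _ ≤ _ := by
      refine add_le_add le_rfl (measure_mono (h.trans (uIcc_subset_Icc ⟨?_, ?_⟩ ⟨?_, ?_⟩))) <;>
        linarith [neg_abs_le (x - b), le_abs_self (x - b), abs_nonneg (x - b)]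
  rw [ContinuousAt, ENNReal.tendsto_nhds (measure_ne_top ν _)]
  intro ε hε
  filter_upwards [ENNReal.tendsto_nhds_zero.1 hm ε hε] with x hx
  exact ⟨tsub_le_iff_right.2 ((hcover x b x Icc_subset_uIcc).trans (by gcongr)),
    (hcover x x b Icc_subset_uIcc').trans (by gcongr)⟩

lemma exists_subset_measure_eq_of_measure_preimage_singleton {X : Type*} [MeasurableSpace X]
    {μ : Measure X} {g : X → ℝ} (hg : Measurable g) (hnull : ∀ a, μ (g ⁻¹' {a}) = 0)
    {D : Set X} (hD : MeasurableSet D) (hDfin : μ D ≠ ∞) {r : ℝ≥0∞} (hr : r ≤ μ D) :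
    ∃ W ⊆ D, MeasurableSet W ∧ μ W = r := by
  obtain rfl | hr0 := eq_or_ne r 0
  · exact ⟨∅, empty_subset _, .empty, measure_empty⟩
  obtain rfl | hrD := hr.eq_or_lt
  · exact ⟨D, subset_rfl, hD, rfl⟩
  set ν := (μ.restrict D).map g
  have hν : ∀ s, MeasurableSet s → ν s = μ (D ∩ g ⁻¹' s) := fun s hs ↦ by
    rw [Measure.map_apply hg hs, Measure.restrict_apply (hg hs), inter_comm]
  have : IsFiniteMeasure ν := ⟨by simpa [hν univ .univ] using hDfin.lt_top⟩
  have : NullSingletonClass ν := ⟨fun a ↦ by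
    rw [hν _ (measurableSet_singleton a)]
    exact measure_mono_null inter_subset_right (hnull a)⟩
  obtain ⟨a, ha⟩ : ∃ a, ν (Iic a) ≤ r := by
    have : Tendsto (fun c ↦ ν (Iic c)) atBot (𝓝 0) := by
      have h0 : (⋂ c : ℝ, Iic c) = ∅ := iInter_eq_empty_iff.2 fun x ↦ ⟨x - 1, by simp⟩
      simpa [Function.comp_def, h0] using
        tendsto_measure_iInter_atBot (μ := ν) (fun c ↦ measurableSet_Iic.nullMeasurableSet)
          (fun _ _ ↦ Iic_subset_Iic.2) ⟨0, measure_ne_top _ _⟩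
    exact ((tendsto_order.1 this).2 r (pos_iff_ne_zero.2 hr0)).exists.imp fun _ ↦ le_of_lt
  obtain ⟨b, hb⟩ : ∃ b, r ≤ ν (Iic b) := by
    have := tendsto_measure_Iic_atTop ν
    rw [hν univ .univ, preimage_univ, inter_univ] at this
    exact ((tendsto_order.1 this).1 r hrD).exists.imp fun _ ↦ le_of_lt
  obtain ⟨c, hc⟩ := intermediate_value_univ a b (continuous_measure_Iic ν) ⟨ha, hb⟩
  exact ⟨D ∩ g ⁻¹' Iic c, inter_subset_left, hD.inter (hg measurableSet_Iic),
    (hν _ measurableSet_Iic).symm.trans hc⟩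

lemma exists_subset_volume_eq {ι : Type*} [Fintype ι] [Nonempty ι] {D : Set (ι → ℝ)}
    (hD : MeasurableSet D) (hDfin : volume D ≠ ∞) {r : ℝ≥0∞} (hr : r ≤ volume D) :
    ∃ W ⊆ D, MeasurableSet W ∧ volume W = r :=
  let i := Classical.arbitrary ι
  exists_subset_measure_eq_of_measure_preimage_singleton (measurable_pi_apply i)
    (fun a ↦ by rw [volume_pi]; exact Measure.pi_hyperplane (fun _ ↦ (volume : Measure ℝ)) i a)
    hD hDfin hr

lemma exists_isFsigma_subset_volume_eq {ι : Type*} [Fintype ι] [Nonempty ι] {B : Set (ι → ℝ)}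
    (hB : MeasurableSet B) (hBfin : volume B ≠ ∞) {r : ℝ≥0∞} (hr : r ≤ volume B) :
    ∃ C ⊆ B, IsFsigma C ∧ volume C = r := by
  obtain ⟨W, hWB, hW, rfl⟩ := exists_subset_volume_eq hB hBfin hr
  obtain ⟨C, hCW, hC, hCvol⟩ :=
    exists_isFsigma_subset_measure_eq hW (ne_top_of_le_ne_top hBfin (measure_mono hWB))
  exact ⟨C, hCW.trans hWB, hC, hCvol⟩

lemma exists_measure_lt_le_le_measure_le {Y α : Type*} [MeasurableSpace Y]
    [CompleteLinearOrder α] [DenselyOrdered α] [TopologicalSpace α] [OrderTopology α]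
    [FirstCountableTopology α] [MeasurableSpace α] [OpensMeasurableSpace α]
    (ρ : Measure Y) [IsFiniteMeasure ρ] {σ : Y → α} (hσ : Measurable σ) {c : ℝ≥0∞}
    (hc : c ≤ ρ univ) :
    ∃ l, ρ {y | l < σ y} ≤ c ∧ c ≤ ρ {y | l ≤ σ y} := by
  set L := {l | ρ {y | l < σ y} ≤ c}
  have hL : L.Nonempty := ⟨⊤, by simp [L]⟩
  refine ⟨sInf L, ?_, ?_⟩
  · obtain ⟨u, hu, hu_lim, huL⟩ := exists_seq_tendsto_sInf hL (OrderBot.bddBelow L)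
    have hU : {y | sInf L < σ y} = ⋃ n, {y | u n < σ y} := by
      ext y
      simp only [mem_ofPred_eq, mem_iUnion]
      exact ⟨fun h ↦ ((tendsto_order.1 hu_lim).2 _ h).exists,
        fun ⟨n, hn⟩ ↦ (sInf_le (huL n)).trans_lt hn⟩
    rw [hU, Monotone.measure_iUnion (s := fun n ↦ {y | u n < σ y})
      fun m n hmn y hy ↦ (hu hmn).trans_lt hy]
    exact iSup_le huL
  · rcases eq_bot_or_bot_lt (sInf L) with h | h
    · simpa [h] using hc
    obtain ⟨u, hu, hu_mem, hu_lim⟩ := exists_seq_strictMono_tendsto' h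
    have hV : {y | sInf L ≤ σ y} = ⋂ n, {y | u n < σ y} := by
      ext y
      simp only [mem_ofPred_eq, mem_iInter]
      exact ⟨fun h n ↦ (hu_mem n).2.trans_le h, fun h ↦ le_of_tendsto' hu_lim fun n ↦ (h n).le⟩
    rw [hV, Antitone.measure_iInter (s := fun n ↦ {y | u n < σ y})
      (fun m n hmn y hy ↦ (hu.monotone hmn).trans_lt hy)
      (fun n ↦ (hσ measurableSet_Ioi).nullMeasurableSet) ⟨0, measure_ne_top _ _⟩]
    exact le_iInf fun n ↦ (not_le.1 fun hn ↦ (hu_mem n).2.not_ge (sInf_le hn)).le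

lemma measure_le_of_withDensity_le {Y : Type*} [MeasurableSpace Y] {ν : Measure Y}
    {σ : Y → ℝ≥0∞} {l : ℝ≥0∞} (hl0 : l ≠ 0) (hltop : l ≠ ∞) {S T : Set Y}
    (hS : MeasurableSet S) (hT : MeasurableSet T) (hσS : ∀ y ∈ S, l ≤ σ y)
    (hσSc : ∀ y ∉ S, σ y ≤ l) (hSfin : ν.withDensity σ S ≠ ∞)
    (hST : ν.withDensity σ S ≤ ν.withDensity σ T) : ν S ≤ ν T := by
  set ρ := ν.withDensity σ
  have hρ : ρ (S \ T) ≤ ρ (T \ S) := by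
    have hfin : ρ (S ∩ T) ≠ ∞ := ne_top_of_le_ne_top hSfin (measure_mono inter_subset_left)
    refine (ENNReal.add_le_add_iff_left hfin).1 ?_
    rw [measure_inter_add_sdiff S hT, inter_comm, measure_inter_add_sdiff T hS]
    exact hST
  have hν : l * ν (S \ T) ≤ l * ν (T \ S) := calc
    l * ν (S \ T) = ∫⁻ _ in S \ T, l ∂ν := (setLIntegral_const _ _).symm
    _ ≤ ρ (S \ T) := by
      rw [withDensity_apply _ (hS.diff hT)]
      exact setLIntegral_mono' (hS.diff hT) fun y hy ↦ hσS y hy.1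
    _ ≤ ρ (T \ S) := hρ
    _ ≤ ∫⁻ _ in T \ S, l ∂ν := by
      rw [withDensity_apply _ (hT.diff hS)]
      exact setLIntegral_mono' (hT.diff hS) fun y hy ↦ hσSc y hy.2
    _ = l * ν (T \ S) := setLIntegral_const _ _
  calc ν S = ν (S ∩ T) + ν (S \ T) := (measure_inter_add_sdiff S hT).symm
    _ ≤ ν (T ∩ S) + ν (T \ S) := by
      rw [inter_comm]
      exact add_le_add le_rfl ((ENNReal.mul_le_mul_iff_right hl0 hltop).1 hν)
    _ = ν T := measure_inter_add_sdiff T hS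

lemma exists_minimal_set_of_absolutelyContinuous {Y : Type*} [MeasurableSpace Y]
    {ν ρ : Measure Y} [SigmaFinite ν] [IsFiniteMeasure ρ]
    (hsplit : ∀ D, MeasurableSet D → ν D ≠ ∞ → ∀ r ≤ ν D, ∃ W ⊆ D, MeasurableSet W ∧ ν W = r)
    (hρν : ρ ≪ ν) {c : ℝ≥0∞} (hc0 : c ≠ 0) (hc : c < ρ univ) :
    ∃ S, MeasurableSet S ∧ ρ S = c ∧ ∀ T, MeasurableSet T → c ≤ ρ T → ν S ≤ ν T := by
  set σ := ρ.rnDeriv ν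
  have hσ : Measurable σ := Measure.measurable_rnDeriv ρ ν
  have hρ : ν.withDensity σ = ρ := Measure.withDensity_rnDeriv_eq ρ ν hρν
  obtain ⟨l, hlU, hlV⟩ := exists_measure_lt_le_le_measure_le ρ hσ hc.le
  set U := {y | l < σ y}
  set V := {y | l ≤ σ y}
  have hU : MeasurableSet U := hσ measurableSet_Ioi
  have hV : MeasurableSet V := hσ measurableSet_Ici
  have hUV : U ⊆ V := fun y (hy : l < σ y) ↦ hy.le
  have hl0 : l ≠ 0 := by
    rintro rfl
    have : ρ U = ρ univ := measure_congr (ae_eq_univ.2 (ae_iff.1 (Measure.rnDeriv_pos hρν)))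
    exact hc.not_ge (this ▸ hlU)
  have hltop : l ≠ ∞ := by
    rintro rfl
    have : ρ V = 0 := measure_eq_zero_iff_ae_notMem.2 <| by
      filter_upwards [hρν.ae_le (Measure.rnDeriv_lt_top ρ ν)] with y hy using hy.not_ge
    exact hc0 (le_zero_iff.1 (this ▸ hlV))
  have hρlevel : ∀ W ⊆ V \ U, MeasurableSet W → ρ W = l * ν W := fun W hWVU hW ↦ by
    rw [← hρ, withDensity_apply _ hW, ← setLIntegral_const]
    refine setLIntegral_congr_fun hW fun y hy ↦ ?_
    exact le_antisymm (not_lt.1 (hWVU hy).2) (hWVU hy).1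
  have hρVU : ρ (V \ U) = l * ν (V \ U) := hρlevel _ subset_rfl (hV.diff hU)
  have hνVU : ν (V \ U) ≠ ∞ := fun h ↦ measure_ne_top ρ (V \ U) (by
    rw [hρVU, h, ENNReal.mul_top hl0])
  obtain ⟨W, hWVU, hW, hνW⟩ := hsplit (V \ U) (hV.diff hU) hνVU ((c - ρ U) / l) <| by
    rw [ENNReal.div_le_iff hl0 hltop, mul_comm, ← hρVU, tsub_le_iff_left,
      measure_add_sdiff hU.nullMeasurableSet,
      union_eq_self_of_subset_left hUV]
    exact hlV
  have hρW : ρ W = c - ρ U := by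
    rw [hρlevel W hWVU hW, hνW, ENNReal.mul_div_cancel hl0 hltop]
  have hUW : Disjoint U W := disjoint_left.2 fun y hyU hyW ↦ (hWVU hyW).2 hyU
  have hρS : ρ (U ∪ W) = c := by
    rw [measure_union hUW hW, hρW, add_tsub_cancel_of_le hlU]
  refine ⟨U ∪ W, hU.union hW, hρS, fun T hT hcT ↦ ?_⟩
  refine measure_le_of_withDensity_le (σ := σ) hl0 hltop (hU.union hW) hT ?_ ?_ ?_ ?_
  · rintro y (hy | hy)
    exacts [le_of_lt hy, (hWVU hy).1]
  · exact fun y hy ↦ not_lt.1 fun h ↦ hy (Or.inl h)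
  · rw [hρ]; exact measure_ne_top _ _
  · rw [hρ, hρS]; exact hcT

lemma continuous_projHyp {n : ℕ} (j : Fin n) : Continuous (projHyp j) :=
  continuous_pi fun i ↦ continuous_apply i.1

lemma volume_preimage_projHyp_eq_zero {n : ℕ} (j : Fin n) {S : Set ({i : Fin n // i ≠ j} → ℝ)}
    (hS : MeasurableSet S) (h : volume S = 0) : volume (projHyp j ⁻¹' S) = 0 := by
  have hmp := measurePreserving_piEquivPiSubtypeProd (fun _ : Fin n ↦ (volume : Measure ℝ)) (· = j)
  have : projHyp j ⁻¹' S =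
      MeasurableEquiv.piEquivPiSubtypeProd (fun _ ↦ ℝ) (· = j) ⁻¹' (univ ×ˢ S) := by
    ext; simp only [mem_preimage, mem_prod, mem_univ, true_and]; rfl
  rw [this, volume_pi, hmp.measure_preimage (MeasurableSet.univ.prod hS).nullMeasurableSet,
    Measure.prod_prod]
  exact mul_eq_zero_of_right _ h

lemma exists_minimal_projHyp_image {n : ℕ} (j : Fin n) {E : Set (Fin n → ℝ)}
    (hEfin : volume E ≠ ∞) {c : ℝ≥0∞} (hc0 : c ≠ 0) (hc : c < volume E) :
    ∃ S, MeasurableSet S ∧ c ≤ volume (E ∩ projHyp j ⁻¹' S) ∧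
      ∀ A ⊆ E, MeasurableSet (projHyp j '' A) → c ≤ volume A →
        volume S ≤ volume (projHyp j '' A) := by
  by_cases hY : IsEmpty {i : Fin n // i ≠ j}
  -- for `n = 1` the hyperplane is a point, the projection of every nonempty set
  · refine ⟨univ, .univ, by simpa using hc.le, fun A _ _ hcA ↦ ?_⟩
    have hA : A.Nonempty := nonempty_of_measure_ne_zero (ne_bot_of_le_ne_bot hc0 hcA)
    rw [(hA.image _).eq_univ]
  have : Nonempty {i : Fin n // i ≠ j} := not_isEmpty_iff.1 hY
  set ρ := (volume.restrict E).map (projHyp j)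
  have hρ : ∀ S, MeasurableSet S → ρ S = volume (E ∩ projHyp j ⁻¹' S) := fun S hS ↦ by
    rw [Measure.map_apply (continuous_projHyp j).measurable hS,
      Measure.restrict_apply ((continuous_projHyp j).measurable hS), inter_comm]
  have : IsFiniteMeasure ρ := ⟨by simpa [hρ univ .univ] using hEfin.lt_top⟩
  have hρν : ρ ≪ volume := Measure.AbsolutelyContinuous.mk fun S hS h0 ↦ by
    rw [hρ S hS]
    exact measure_mono_null inter_subset_right (volume_preimage_projHyp_eq_zero j hS h0)
  obtain ⟨S, hS, hρS, hmin⟩ := exists_minimal_set_of_absolutelyContinuous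
    (fun D hD hDfin r hr ↦ exists_subset_volume_eq hD hDfin hr) hρν hc0
    (by rwa [hρ univ .univ, preimage_univ, inter_univ])
  refine ⟨S, hS, ((hρ S hS).symm.trans hρS).ge, fun A hAE hA hcA ↦ hmin _ hA ?_⟩
  calc c ≤ volume A := hcA
    _ ≤ volume (E ∩ projHyp j ⁻¹' (projHyp j '' A)) :=
      measure_mono fun x hx ↦ ⟨hAE hx, mem_image_of_mem _ hx⟩
    _ = ρ (projHyp j '' A) := (hρ _ hA).symm

/-- One-step projection lemma: for an F_σ set E ⊆ ℝ^n with |E| = t ∈ (0,∞) there is an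
F_σ subset E₁ ⊆ E with |E₁| = t/2 whose projection Π₁ is minimal among projections of
F_σ subsets A ⊆ E with |A| ≥ t/2. -/
theorem stmt8 (n : ℕ) (hn : 0 < n) (E : Set (Fin n → ℝ)) (hE : IsFsigma E)
    (t : ℝ) (ht : 0 < t) (hEt : volume E = ENNReal.ofReal t) :
    ∃ E₁ : Set (Fin n → ℝ), IsFsigma E₁ ∧ E₁ ⊆ E ∧
      volume E₁ = ENNReal.ofReal (t / 2) ∧
      ∀ A : Set (Fin n → ℝ), IsFsigma A → A ⊆ E →
        ENNReal.ofReal (t / 2) ≤ volume A →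
        volume (projHyp (⟨0, hn⟩ : Fin n) '' E₁) ≤ volume (projHyp (⟨0, hn⟩ : Fin n) '' A) := by
  have : Nonempty (Fin n) := ⟨⟨0, hn⟩⟩
  have hEfin : volume E ≠ ∞ := hEt ▸ ofReal_ne_top
  have hc0 : ENNReal.ofReal (t / 2) ≠ 0 := by simpa using half_pos ht
  have hc : ENNReal.ofReal (t / 2) < volume E :=
    hEt ▸ (ENNReal.ofReal_lt_ofReal_iff ht).2 (half_lt_self ht)
  obtain ⟨S, hS, hcS, hmin⟩ := exists_minimal_projHyp_image ⟨0, hn⟩ hEfin hc0 hc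
  obtain ⟨E₁, hE₁S, hE₁, hE₁c⟩ := exists_isFsigma_subset_volume_eq
    (hE.measurableSet.inter ((continuous_projHyp _).measurable hS))
    (ne_top_of_le_ne_top hEfin (measure_mono inter_subset_left)) hcS
  refine ⟨E₁, hE₁, fun x hx ↦ (hE₁S hx).1, hE₁c, fun A hA hAE hcA ↦ ?_⟩
  calc volume (projHyp _ '' E₁) ≤ volume S :=
        measure_mono (image_subset_iff.2 fun x hx ↦ (hE₁S hx).2)
    _ ≤ _ := hmin A hAE (hA.isSigmaCompact.image (continuous_projHyp _)).measurableSet hcA
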